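/- Let n ≥ 1 and let d ∈ P^sp_D(2n) = P_{0,0}(2n). Then f_DC(d) := ((d⁺)⁻)_C belongs to P^ms_C(2n) = P_{1,1}(2n). -/

import Mathlib

/-- A partition of `N`: a non-increasing list of positive naturals summing to `N`. -/
def IsPartition (N : ℕ) (l : List ℕ) : Prop :=
  l.Pairwise (· ≥ ·) ∧ (∀ p ∈ l, 0 < p) ∧ l.sum = N

/-- Dominance order on partitions: `Dom p q` means `p ⪯ q`,
i.e. every initial partial sum of `p` is at most that of `q`. -/
def Dom (p q : List ℕ) : Prop :=
  ∀ j : ℕ, (p.take j).sum ≤ (q.take j).sum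

/-- The height `h_d(s) = #{j : d_j ≥ s}`. -/
def height (l : List ℕ) (s : ℕ) : ℕ :=
  (l.filter (fun p => decide (s ≤ p))).length

/-- Membership in `P_ε(N)`: every part congruent to `ε` mod 2 occurs with even multiplicity. -/
def PEps (e : ℕ) (l : List ℕ) : Prop :=
  ∀ s ∈ l, s % 2 = e % 2 → Even (l.count s)

/-- Membership in `P_{ε,ε'}(N)`: lies in `P_ε` and `h_d(s) ≡ ε'  (mod 2)` for every integer
`s ≥ 0` with `s ≡ ε (mod 2)` which is either `0` or a part of `d`. -/
def PEpsEps (e e' : ℕ) (l : List ℕ) : Prop :=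
  PEps e l ∧
    ∀ s : ℕ, s % 2 = e % 2 → (s = 0 ∨ s ∈ l) → height l s % 2 = e' % 2

/-- `d⁺ = [d₁ + 1, d₂, …, d_k]`. -/
def dplus : List ℕ → List ℕ
  | [] => []
  | a :: rest => (a + 1) :: rest

/-- `d⁻ = [d₁, …, d_{k−1}, d_k − 1]`, the last entry removed if `d_k = 1`. -/
def dminus (l : List ℕ) : List ℕ :=
  (l.dropLast ++ [l.getLastD 0 - 1]).filter (fun p => decide (0 < p))

/-- `IsCollapse e N l c` says that `c` is the collapse of `l` into `P_e`: the greatest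
element, in the dominance order, of the set of partitions of `N` lying in `P_e` and
dominated by `l`. -/
def IsCollapse (e N : ℕ) (l c : List ℕ) : Prop :=
  IsPartition N c ∧ PEps e c ∧ Dom c l ∧
    ∀ m : List ℕ, IsPartition N m → PEps e m → Dom m l → Dom m c

/-!
Suppose an odd part `s` of `e = μ_C`, `μ = (d⁺)⁻`, had even height. As odd parts of `e` occur
with even multiplicity, `e = A ++ s^(m+2) ++ C` with every part of `A` above `s` and both `|A|`
and `∑ A` even. Moving one box from the last row of length `s` to the first one gives a partition
in `P_1` strictly above `e`. It is still dominated by `μ`, because `e` is strictly below `μ` at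
every row `j` inside the block of `s`'s: there `e_1 + ⋯ + e_j ≡ j (mod 2)`, whereas equality
with `μ` would force `d_j = s` and `μ_1 + ⋯ + μ_j = d_1 + ⋯ + d_j + 1 ≡ j + 1`, the last
congruence because `d ∈ P_0`. This contradicts the maximality of the collapse.
-/

namespace List

theorem sum_take_succ_eq_add_getD (l : List ℕ) (k : ℕ) :
    (l.take (k + 1)).sum = (l.take k).sum + l.getD k 0 := by
  induction l generalizing k with
  | nil => simp
  | cons x t ih => cases k <;> simp [ih, Nat.add_assoc]

theorem getD_append_cons_succ (Y Z : List ℕ) (q i : ℕ) :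
    (Y ++ (q + 1) :: Z).getD i 0 = (Y ++ q :: Z).getD i 0 + if i = Y.length then 1 else 0 := by
  induction Y generalizing i with
  | nil => cases i <;> simp
  | cons y Y ih =>
    cases i <;> simp only [cons_append, getD_cons_zero, getD_cons_succ, ih, length_cons] <;> simp

theorem sum_take_add_ite_eq {x y : List ℕ} {p q : ℕ}
    (h : ∀ i, x.getD i 0 + (if i = p then 1 else 0) = y.getD i 0 + if i = q then 1 else 0)
    (j : ℕ) :
    (x.take j).sum + (if p < j then 1 else 0) = (y.take j).sum + if q < j then 1 else 0 := by
  induction j with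
  | zero => simp
  | succ j ih =>
    have hj := h j
    simp only [sum_take_succ_eq_add_getD]
    split_ifs at * <;> omega

theorem getD_filter_pos {l : List ℕ} (hl : l.Pairwise (· ≥ ·)) (i : ℕ) :
    (l.filter (0 < ·)).getD i 0 = l.getD i 0 := by
  induction l generalizing i with
  | nil => simp
  | cons x t ih =>
    rw [pairwise_cons] at hl
    rcases Nat.eq_zero_or_pos x with rfl | hx
    · have ht : 0 :: t = replicate (t.length + 1) 0 :=
        eq_replicate_iff.mpr ⟨rfl, fun b hb => by
          rcases mem_cons.mp hb with rfl | hb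
          · rfl
          · simpa using hl.1 b hb⟩
      rw [ht]
      simp
    · rw [filter_cons_of_pos (by simpa using hx)]
      cases i <;> simp only [getD_cons_zero, getD_cons_succ, ih hl.2]

theorem sum_filter_pos (l : List ℕ) : (l.filter (0 < ·)).sum = l.sum := by
  induction l with
  | nil => rfl
  | cons x t ih => rcases Nat.eq_zero_or_pos x with rfl | hx <;> simp [*]

theorem getD_le_getD_of_pairwise {l : List ℕ} (hl : l.Pairwise (· ≥ ·)) {i j : ℕ} (hij : i ≤ j) :
    l.getD j 0 ≤ l.getD i 0 := by
  rcases lt_or_ge j l.length with hj | hj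
  · rcases hij.eq_or_lt with rfl | hij
    · rfl
    · simpa [getD_eq_getElem?_getD, getElem?_eq_getElem hj, getElem?_eq_getElem (hij.trans hj)]
        using pairwise_iff_getElem.mp hl i j (hij.trans hj) hj hij
  · rw [getD_eq_default _ _ hj]
    exact Nat.zero_le _

theorem eq_filter_gt_append_replicate_append_filter_lt {l : List ℕ} (hl : l.Pairwise (· ≥ ·))
    (s : ℕ) : l = l.filter (s < ·) ++ replicate (l.count s) s ++ l.filter (· < s) := by
  induction l with
  | nil => rfl
  | cons x t ih =>
    rw [pairwise_cons] at hl
    have ih := ih hl.2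
    rcases lt_trichotomy x s with h | rfl | h
    · have hgt : t.filter (s < ·) = [] := filter_eq_nil_iff.mpr fun a ha => by
        have := hl.1 a ha; simp; omega
      have hlt : t.filter (· < s) = t := filter_eq_self.mpr fun a ha => by
        have := hl.1 a ha; simp; omega
      have hc : t.count s = 0 := count_eq_zero.mpr fun hs => by have := hl.1 s hs; omega
      simp [h, hgt, hlt, hc, not_lt.mpr h.le, h.ne]
    · have hgt : t.filter (x < ·) = [] := filter_eq_nil_iff.mpr fun a ha => by
        have := hl.1 a ha; simp; omega
      rw [hgt] at ih
      simpa [hgt, replicate_succ] using ih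
    · simpa [h, not_lt.mpr h.le, h.ne'] using ih

section Blocks

variable {A C : List ℕ} {s c : ℕ}

theorem getD_append_replicate_append {i : ℕ} (h₁ : A.length ≤ i) (h₂ : i < A.length + c) :
    (A ++ replicate c s ++ C).getD i 0 = s := by
  rw [append_assoc, getD_append_right _ _ _ _ h₁, getD_append _ _ _ _ (by simp; omega),
    getD_replicate _ (by omega)]

theorem take_append_replicate_append {k : ℕ} (h₁ : A.length ≤ k) (h₂ : k ≤ A.length + c) :
    (A ++ replicate c s ++ C).take k = A ++ replicate (k - A.length) s := by
  rw [append_assoc, take_append, take_of_length_le h₁, take_append, take_replicate,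
    length_replicate, Nat.sub_eq_zero_of_le (by omega : k - A.length ≤ c), take_zero, append_nil,
    min_eq_left (by omega)]

theorem lt_length_of_getD_pos {l : List ℕ} {i : ℕ} (h : 0 < l.getD i 0) : i < l.length := by
  by_contra hi
  rw [getD_eq_default _ _ (not_lt.mp hi)] at h
  exact h.false

theorem getD_mem_of_pos {l : List ℕ} {i : ℕ} (h : 0 < l.getD i 0) : l.getD i 0 ∈ l := by
  rw [getD_eq_getElem?_getD, getElem?_eq_getElem (lt_length_of_getD_pos h)]
  exact getElem_mem _

theorem mem_block_of_getD_eq (hA : ∀ x ∈ A, s < x) (hC : ∀ x ∈ C, x < s) (hs : 0 < s) {i : ℕ}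
    (h : (A ++ replicate c s ++ C).getD i 0 = s) : A.length ≤ i ∧ i < A.length + c := by
  have hpos : 0 < (A ++ replicate c s ++ C).getD i 0 := by rwa [h]
  by_cases hiA : i < A.length
  · rw [append_assoc, getD_append _ _ _ _ hiA] at h hpos
    exact absurd (hA _ (getD_mem_of_pos hpos)) (by omega)
  by_cases hiC : A.length + c ≤ i
  · rw [getD_append_right _ _ _ _ (by simp; omega)] at h hpos
    exact absurd (hC _ (getD_mem_of_pos hpos)) (by omega)
  omega

theorem sum_take_append_replicate_append_mod_two (hs : s % 2 = 1) {k : ℕ}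
    (h₁ : A.length ≤ k) (h₂ : k ≤ A.length + c) :
    ((A ++ replicate c s ++ C).take k).sum % 2 = (A.sum + A.length + k) % 2 := by
  rw [take_append_replicate_append h₁ h₂, sum_append, sum_replicate, smul_eq_mul,
    Nat.add_mod, Nat.mul_mod, hs]
  omega

end Blocks

theorem sum_mod_two_eq_countP_odd (l : List ℕ) :
    l.sum % 2 = l.countP (· % 2 = 1) % 2 := by
  induction l with
  | nil => rfl
  | cons x t ih =>
    rw [sum_cons, countP_cons]
    split <;> simp_all <;> omega

end List

open List

theorem height_eq_length_filter_gt_add_count (l : List ℕ) (s : ℕ) :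
    height l s = (l.filter (s < ·)).length + l.count s := by
  induction l with
  | nil => rfl
  | cons x t ih =>
    simp only [height] at ih ⊢
    simp only [filter_cons, count_cons, beq_iff_eq]
    split_ifs <;> simp_all <;> omega

namespace PEps

variable {e : ℕ} {l : List ℕ}

theorem filter (h : PEps e l) (p : ℕ → Bool) : PEps e (l.filter p) := fun v hv hve => by
  rw [mem_filter] at hv
  rw [count_filter hv.2]
  exact h v hv.1 hve

theorem even_count (h : PEps e l) {v : ℕ} (hv : v % 2 = e % 2) : Even (l.count v) := by
  by_cases hvl : v ∈ l
  · exact h v hvl hv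
  · rw [count_eq_zero.mpr hvl]
    exact ⟨0, rfl⟩

theorem even_countP (h : PEps e l) : Even (l.countP (· % 2 = e % 2)) := by
  rw [← sum_map_count_dedup_filter_eq_countP, even_iff_two_dvd]
  refine dvd_sum fun x hx => ?_
  obtain ⟨v, hv, rfl⟩ := mem_map.mp hx
  rw [mem_filter, mem_dedup] at hv
  exact even_iff_two_dvd.mp (h v hv.1 (by simpa using hv.2))

theorem even_sum (h : PEps 1 l) : Even l.sum := by
  have := h.even_countP
  rw [Nat.even_iff] at this ⊢
  rw [l.sum_mod_two_eq_countP_odd]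
  exact this

theorem even_sum_add_length (h : PEps 0 l) : Even (l.sum + l.length) := by
  have hodd := l.sum_mod_two_eq_countP_odd
  have hlen : l.length = l.countP (· % 2 = 1) + l.countP (· % 2 = 0 % 2) := by
    rw [length_eq_countP_add_countP (· % 2 = 1)]
    exact congrArg _ (countP_congr fun x _ => by simp)
  have := h.even_countP
  rw [Nat.even_iff] at this ⊢
  omega

end PEps

namespace Dom

variable {p q : List ℕ} {k : ℕ}

theorem getD_le_getD (h : Dom p q) (hk : (p.take k).sum = (q.take k).sum) :
    p.getD k 0 ≤ q.getD k 0 := by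
  have := h (k + 1)
  rw [sum_take_succ_eq_add_getD, sum_take_succ_eq_add_getD] at this
  omega

theorem getD_pred_le_getD_pred (h : Dom p q) (hk₀ : 1 ≤ k)
    (hk : (p.take k).sum = (q.take k).sum) : q.getD (k - 1) 0 ≤ p.getD (k - 1) 0 := by
  have := h (k - 1)
  obtain ⟨j, rfl⟩ : ∃ j, k = j + 1 := ⟨k - 1, by omega⟩
  rw [sum_take_succ_eq_add_getD, sum_take_succ_eq_add_getD] at hk
  simp only [Nat.add_sub_cancel] at this ⊢
  omega

end Dom

theorem PEps.sum_take_mod_two {d : List ℕ} (hP : PEps 0 d) (hd : d.Pairwise (· ≥ ·))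
    {s k : ℕ} (hs : s % 2 = 1) (hk : 1 ≤ k) (hdk : d.getD (k - 1) 0 = s) :
    (d.take k).sum % 2 = k % 2 := by
  have hdec := eq_filter_gt_append_replicate_append_filter_lt hd s
  have hA : ∀ x ∈ d.filter (s < ·), s < x := fun x hx => by simpa using (mem_filter.mp hx).2
  have hC : ∀ x ∈ d.filter (· < s), x < s := fun x hx => by simpa using (mem_filter.mp hx).2
  rw [hdec] at hdk ⊢
  obtain ⟨h₁, h₂⟩ := mem_block_of_getD_eq hA hC (by omega) hdk
  rw [sum_take_append_replicate_append_mod_two hs (by omega) (by omega)]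
  have := (hP.filter (s < ·)).even_sum_add_length
  rw [Nat.even_iff] at this
  omega

theorem getD_dminus_dplus_add {d : List ℕ} (hd : d.Pairwise (· ≥ ·)) (hpos : ∀ p ∈ d, 0 < p)
    (i : ℕ) :
    (dminus (dplus d)).getD i 0 + (if i = d.length - 1 then 1 else 0)
      = d.getD i 0 + if i = 0 then 1 else 0 := by
  rcases d with _ | ⟨d₀, t⟩
  · cases i <;> simp [dminus, dplus]
  rcases t.eq_nil_or_concat' with rfl | ⟨t, x, rfl⟩
  · cases i <;> simp [dminus, dplus, hpos d₀ (by simp)]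
  have hx : 0 < x := hpos x (by simp)
  have hμ : dminus (dplus (d₀ :: (t ++ [x]))) = ((d₀ + 1) :: (t ++ [x - 1])).filter (0 < ·) := by
    rw [dminus, dplus, ← cons_append, dropLast_concat, getLastD_concat, cons_append]
  have hsorted : ((d₀ + 1) :: (t ++ [x - 1])).Pairwise (· ≥ ·) := by
    simp only [pairwise_cons, pairwise_append, mem_append, mem_singleton] at hd ⊢
    grind
  have h₁ := getD_append_cons_succ [] (t ++ [x]) d₀ i
  have h₂ := getD_append_cons_succ ((d₀ + 1) :: t) [] (x - 1) i
  rw [Nat.sub_add_cancel hx] at h₂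
  rw [hμ, getD_filter_pos hsorted]
  simp only [nil_append, cons_append, length_cons, length_append, length_nil] at h₁ h₂ ⊢
  split_ifs at * <;> omega

theorem sum_take_dminus_dplus_add {d : List ℕ} (hd : d.Pairwise (· ≥ ·))
    (hpos : ∀ p ∈ d, 0 < p) (j : ℕ) :
    ((dminus (dplus d)).take j).sum + (if d.length - 1 < j then 1 else 0)
      = (d.take j).sum + if 0 < j then 1 else 0 :=
  sum_take_add_ite_eq (getD_dminus_dplus_add hd hpos) j

theorem sum_take_lt_of_dom_dminus_dplus {d e : List ℕ} (hd : d.Pairwise (· ≥ ·))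
    (hpos : ∀ p ∈ d, 0 < p) (hP : PEps 0 d) (hdom : Dom e (dminus (dplus d)))
    {s k : ℕ} (hs : s % 2 = 1) (hk : 1 ≤ k) (he₁ : e.getD (k - 1) 0 = s) (he₂ : e.getD k 0 = s)
    (hpar : (e.take k).sum % 2 = k % 2) :
    (e.take k).sum < ((dminus (dplus d)).take k).sum := by
  by_contra hlt
  have heq := le_antisymm (hdom k) (not_lt.mp hlt)
  have hμk := hdom.getD_le_getD heq
  have hμk₁ := hdom.getD_pred_le_getD_pred hk heq
  have hk' := getD_dminus_dplus_add hd hpos k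
  have hk₁' := getD_dminus_dplus_add hd hpos (k - 1)
  have hanti := getD_le_getD_of_pairwise hd (Nat.sub_le k 1)
  have hkL : k < d.length := lt_length_of_getD_pos (by split_ifs at hk' <;> omega)
  have hdk : d.getD (k - 1) 0 = s := by split_ifs at hk' hk₁' <;> omega
  have hpar_d := hP.sum_take_mod_two hd hs hk hdk
  have hsum := sum_take_dminus_dplus_add hd hpos k
  split_ifs at hsum <;> omega

theorem exists_blocks_of_even_height {e : List ℕ} (he : e.Pairwise (· ≥ ·)) (hP : PEps 1 e)
    {s : ℕ} (hs : s % 2 = 1) (hmem : s ∈ e) (hh : Even (height e s)) :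
    ∃ A C m, e = A ++ replicate (m + 2) s ++ C ∧ (∀ x ∈ A, s < x) ∧ (∀ x ∈ C, x < s) ∧
      Even (A.sum + A.length) := by
  have hc : Even (e.count s) := hP s hmem hs
  have hc₂ : 2 ≤ e.count s := by
    have := count_pos_iff.mpr hmem
    rw [Nat.even_iff] at hc
    omega
  refine ⟨e.filter (s < ·), e.filter (· < s), e.count s - 2, ?_, fun x hx => ?_, fun x hx => ?_,
    ?_⟩
  · rw [Nat.sub_add_cancel hc₂]
    exact eq_filter_gt_append_replicate_append_filter_lt he s
  · simpa using (mem_filter.mp hx).2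
  · simpa using (mem_filter.mp hx).2
  · rw [height_eq_length_filter_gt_add_count] at hh
    exact (hP.filter _).even_sum.add ((Nat.even_add.mp hh).mpr hc)

/-- The partition `A ++ replicate (m + 2) s ++ C` with one box moved from its last row of
length `s` to its first one; a row of length `s - 1 = 0` is dropped. -/
def moveBox (A C : List ℕ) (s m : ℕ) : List ℕ :=
  (A ++ (s + 1) :: (replicate m s ++ (s - 1) :: C)).filter (0 < ·)

section MoveBox

variable {A C : List ℕ} {s m : ℕ}

theorem pairwise_append_cons_replicate_append_cons
    (he : (A ++ replicate (m + 2) s ++ C).Pairwise (· ≥ ·))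
    (hA : ∀ x ∈ A, s < x) (hC : ∀ x ∈ C, x < s) :
    (A ++ (s + 1) :: (replicate m s ++ (s - 1) :: C)).Pairwise (· ≥ ·) := by
  simp only [pairwise_append, pairwise_cons, pairwise_replicate, mem_append, mem_cons,
    mem_replicate] at he ⊢
  have hC' : ∀ b ∈ C, b ≤ s - 1 := fun b hb => by have := hC b hb; omega
  refine ⟨he.1.1, ⟨fun b hb => ?_, Or.inr le_rfl, ⟨hC', he.2.1⟩, fun a ha b hb => ?_⟩,
    fun a ha b hb => ?_⟩
  · rcases hb with ⟨-, rfl⟩ | rfl | hb <;> grind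
  · rcases hb with rfl | hb <;> grind
  · have := hA a ha
    rcases hb with rfl | ⟨-, rfl⟩ | rfl | hb <;> grind

theorem getD_moveBox_add (he : (A ++ replicate (m + 2) s ++ C).Pairwise (· ≥ ·))
    (hA : ∀ x ∈ A, s < x) (hC : ∀ x ∈ C, x < s) (hs : 0 < s) (i : ℕ) :
    (moveBox A C s m).getD i 0 + (if i = A.length + m + 1 then 1 else 0)
      = (A ++ replicate (m + 2) s ++ C).getD i 0 + if i = A.length then 1 else 0 := by
  have h₁ := getD_append_cons_succ A (replicate m s ++ (s - 1) :: C) s i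
  have h₂ := getD_append_cons_succ (A ++ s :: replicate m s) C (s - 1) i
  rw [Nat.sub_add_cancel hs] at h₂
  rw [moveBox, getD_filter_pos (pairwise_append_cons_replicate_append_cons he hA hC), h₁]
  have hrep : replicate (m + 2) s = s :: (replicate m s ++ [s]) := by
    rw [replicate_succ, replicate_succ']
  simp only [hrep, append_assoc, cons_append, nil_append, length_append, length_cons,
    length_replicate] at h₂ ⊢
  split_ifs at * <;> omega

theorem sum_take_moveBox_add (he : (A ++ replicate (m + 2) s ++ C).Pairwise (· ≥ ·))
    (hA : ∀ x ∈ A, s < x) (hC : ∀ x ∈ C, x < s) (hs : 0 < s) (j : ℕ) :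
    ((moveBox A C s m).take j).sum + (if A.length + m + 1 < j then 1 else 0)
      = ((A ++ replicate (m + 2) s ++ C).take j).sum + if A.length < j then 1 else 0 :=
  sum_take_add_ite_eq (getD_moveBox_add he hA hC hs) j

theorem not_dom_moveBox (he : (A ++ replicate (m + 2) s ++ C).Pairwise (· ≥ ·))
    (hA : ∀ x ∈ A, s < x) (hC : ∀ x ∈ C, x < s) (hs : 0 < s) :
    ¬ Dom (moveBox A C s m) (A ++ replicate (m + 2) s ++ C) := fun h => by
  have h₁ := sum_take_moveBox_add he hA hC hs (A.length + 1)
  rw [if_neg (by omega), if_pos (by omega)] at h₁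
  have := h (A.length + 1)
  omega

theorem isPartition_moveBox {N : ℕ} (he : IsPartition N (A ++ replicate (m + 2) s ++ C))
    (hA : ∀ x ∈ A, s < x) (hC : ∀ x ∈ C, x < s) (hs : 0 < s) :
    IsPartition N (moveBox A C s m) := by
  obtain ⟨hsorted, -, hsum⟩ := he
  refine ⟨(pairwise_append_cons_replicate_append_cons hsorted hA hC).filter _, fun p hp => ?_, ?_⟩
  · simpa using (mem_filter.mp hp).2
  · rw [moveBox, sum_filter_pos, ← hsum]
    simp only [sum_append, sum_cons, sum_replicate, smul_eq_mul]
    have : (m + 2) * s = m * s + (s + 1) + (s - 1) := by rw [add_mul]; omega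
    omega

theorem PEps.moveBox (he : PEps 1 (A ++ replicate (m + 2) s ++ C)) (hs : s % 2 = 1) :
    PEps 1 (moveBox A C s m) := fun v hv hv₁ => by
  have hv₀ : 0 < v := by simpa using (mem_filter.mp hv).2
  have hcount := he.even_count (v := v) hv₁
  rw [_root_.moveBox, count_filter (by simpa using hv₀)]
  simp only [count_append, count_cons, count_replicate, beq_iff_eq, Nat.even_iff] at hcount ⊢
  split_ifs at * <;> omega

theorem dom_moveBox {d : List ℕ} (hd : d.Pairwise (· ≥ ·)) (hpos : ∀ p ∈ d, 0 < p)
    (hP : PEps 0 d) (he : (A ++ replicate (m + 2) s ++ C).Pairwise (· ≥ ·))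
    (hA : ∀ x ∈ A, s < x) (hC : ∀ x ∈ C, x < s) (hs : s % 2 = 1) (hA₂ : Even (A.sum + A.length))
    (hdom : Dom (A ++ replicate (m + 2) s ++ C) (dminus (dplus d))) :
    Dom (moveBox A C s m) (dminus (dplus d)) := fun j => by
  have hmove := sum_take_moveBox_add he hA hC (by omega) j
  have := hdom j
  by_cases hj : A.length < j ∧ j ≤ A.length + m + 1
  · have hpar : ((A ++ replicate (m + 2) s ++ C).take j).sum % 2 = j % 2 := by
      rw [sum_take_append_replicate_append_mod_two hs (by omega) (by omega)]
      rw [Nat.even_iff] at hA₂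
      omega
    have hlt := sum_take_lt_of_dom_dminus_dplus hd hpos hP hdom hs (by omega)
      (getD_append_replicate_append (by omega) (by omega))
      (getD_append_replicate_append (by omega) (by omega)) hpar
    rw [if_neg (by omega), if_pos hj.1] at hmove
    omega
  · split_ifs at hmove <;> omega

end MoveBox

theorem fDC_mem_general (n : ℕ) (d : List ℕ)
    (hd : IsPartition (2 * n) d) (hdD : PEpsEps 0 0 d)
    (e : List ℕ) (he : IsCollapse 1 (2 * n) (dminus (dplus d)) e) :
    PEpsEps 1 1 e := by
  obtain ⟨he_part, heP, hedom, hemax⟩ := he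
  refine ⟨heP, fun s hs hmem => ?_⟩
  rcases hmem with rfl | hmem
  · simp at hs
  by_contra hh
  obtain ⟨A, C, m, rfl, hA, hC, hA₂⟩ :=
    exists_blocks_of_even_height he_part.1 heP hs hmem (Nat.even_iff.mpr (by omega))
  have hs₀ : 0 < s := by omega
  exact not_dom_moveBox he_part.1 hA hC hs₀ <| hemax _ (isPartition_moveBox he_part hA hC hs₀)
    (heP.moveBox hs) (dom_moveBox hd.1 hd.2.1 hdD.1 he_part.1 hA hC hs hA₂ hedom)

/-- If `d ∈ P^sp_D(2n) = P_{0,0}(2n)` then `f_DC(d) = ((d⁺)⁻)_C` lies in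
`P^ms_C(2n) = P_{1,1}(2n)`. -/
theorem fDC_mem (n : ℕ) (hn : 1 ≤ n) (d : List ℕ)
    (hd : IsPartition (2 * n) d) (hdD : PEpsEps 0 0 d)
    (e : List ℕ) (he : IsCollapse 1 (2 * n) (dminus (dplus d)) e) :
    PEpsEps 1 1 e :=
  fDC_mem_general n d hd hdD e he
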